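/- arXiv:2412.10350 — 2 statements merged into one kernel-verified Lean document; each statement's English description precedes it below -/
import Mathlib

section
/- Let p, g ∈ ℝ² with p ≠ g, let u, v be unit vectors, and let κₕ, κₜ > 0 with κₕ < 1. Define h = p + κₕ‖p − g‖u and t = g − κₜ‖p − g‖v. Then ⟨t − h, u⟩ ≥ 0 if and only if ⟨(g − p)/‖g − p‖, u⟩ ≥ κₕ + κₜ·⟨v, u⟩, and the same equivalence holds with strict inequalities. -/
open scoped RealInnerProductSpace

lemma inner_tailway_sub_headway {E : Type*} [NormedAddCommGroup E] [InnerProductSpace ℝ E]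
    {p g u : E} (hpg : p ≠ g) (hu : ‖u‖ = 1) (v : E) (κh κt : ℝ) :
    ⟪(g - (κt * ‖p - g‖) • v) - (p + (κh * ‖p - g‖) • u), u⟫ =
      ‖p - g‖ * (⟪(‖g - p‖)⁻¹ • (g - p), u⟫ - (κh + κt * ⟪v, u⟫)) := by
  have hr : ‖p - g‖ ≠ 0 := norm_ne_zero_iff.2 (sub_ne_zero.2 hpg)
  have huu : ⟪u, u⟫ = 1 := by rw [real_inner_self_eq_norm_sq, hu, one_pow]
  rw [norm_sub_rev g p, inner_smul_left]
  simp only [inner_sub_left, inner_add_left, real_inner_smul_left, huu, RCLike.conj_to_real]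
  field_simp
  ring

theorem stmt_3_general (p g u v : EuclideanSpace ℝ (Fin 2)) (hpg : p ≠ g)
    (hu : ‖u‖ = 1) (κh κt : ℝ) :
    (⟪(g - (κt * ‖p - g‖) • v) - (p + (κh * ‖p - g‖) • u), u⟫ ≥ 0 ↔
      ⟪(‖g - p‖)⁻¹ • (g - p), u⟫ ≥ κh + κt * ⟪v, u⟫) ∧
    (⟪(g - (κt * ‖p - g‖) • v) - (p + (κh * ‖p - g‖) • u), u⟫ > 0 ↔
      ⟪(‖g - p‖)⁻¹ • (g - p), u⟫ > κh + κt * ⟪v, u⟫) := by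
  have hr : 0 < ‖p - g‖ := norm_pos_iff.2 (sub_ne_zero.2 hpg)
  rw [inner_tailway_sub_headway hpg hu, ge_iff_le, ge_iff_le, gt_iff_lt, gt_iff_lt,
    mul_nonneg_iff_of_pos_left hr, mul_pos_iff_of_pos_left hr, sub_nonneg, sub_pos]
  exact ⟨Iff.rfl, Iff.rfl⟩

theorem stmt_3 (p g u v : EuclideanSpace ℝ (Fin 2)) (hpg : p ≠ g)
    (hu : ‖u‖ = 1) (hv : ‖v‖ = 1) (κh κt : ℝ) (hκh : 0 < κh) (hκt : 0 < κt)
    (hκh1 : κh < 1) :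
    (⟪(g - (κt * ‖p - g‖) • v) - (p + (κh * ‖p - g‖) • u), u⟫ ≥ 0 ↔
      ⟪(‖g - p‖)⁻¹ • (g - p), u⟫ ≥ κh + κt * ⟪v, u⟫) ∧
    (⟪(g - (κt * ‖p - g‖) • v) - (p + (κh * ‖p - g‖) • u), u⟫ > 0 ↔
      ⟪(‖g - p‖)⁻¹ • (g - p), u⟫ > κh + κt * ⟪v, u⟫) :=
  stmt_3_general p g u v hpg hu κh κt
end

section
/- Let θ, θ̂ ∈ ℝ and 0 < δ ≤ 2. Consider minimizing f(φ) = 1 − cos(φ − θ) over the set {φ : 1 − cos(φ − θ̂) ≤ δ}. If 1 − cos(θ − θ̂) ≤ δ, the minimizer is φ = θ with minimum value 0. Otherwise, the minimum is attained at φ = θ̂ + s·arccos(1 − δ) where s ∈ {−1, +1} is chosen to maximize cos(φ − θ), and in both cases the minimizer lies on the boundary 1 − cos(φ − θ̂) = δ. -/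
/-!
Write `β = θ - θhat`, `α = arccos (1 - δ)` and `γ = arccos (cos β)`, so `α, γ ∈ [0, π]`.
Replacing `sin ψ * sin β` by `|sin ψ| * |sin β|` shows `cos (ψ - β) ≤ cos (arccos (cos ψ) - γ)`,
which reduces everything to angles in `[0, π]`. A feasible `ψ = φ - θhat` has
`arccos (cos ψ) ≤ α`, and outside the first case `α < γ`; as `cos` decreases on `[0, π]`,
`cos (φ - θ) ≤ cos (α - γ)`. The boundary point `θhat + s * α` with `s * sin β = |sin β|`
attains this bound, so it is the minimiser, and maximality over `s` is the special case
`φ = θhat ± α`.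
-/

open Real

lemma cos_mul_of_eq_neg_one_or_eq_one {s : ℝ} (hs : s = -1 ∨ s = 1) (x : ℝ) :
    cos (s * x) = cos x := by
  rcases hs with rfl | rfl <;> simp

lemma sin_mul_of_eq_neg_one_or_eq_one {s : ℝ} (hs : s = -1 ∨ s = 1) (x : ℝ) :
    sin (s * x) = s * sin x := by
  rcases hs with rfl | rfl <;> simp

lemma exists_eq_neg_one_or_eq_one_mul_eq_abs (x : ℝ) :
    ∃ s : ℝ, (s = -1 ∨ s = 1) ∧ s * x = |x| := by
  rcases le_or_gt 0 x with hx | hx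
  · exact ⟨1, Or.inr rfl, by rw [one_mul, abs_of_nonneg hx]⟩
  · exact ⟨-1, Or.inl rfl, by rw [abs_of_neg hx, neg_one_mul]⟩

lemma sin_arccos_cos (x : ℝ) : sin (arccos (cos x)) = |sin x| := by
  rw [sin_arccos, abs_sin_eq_sqrt_one_sub_cos_sq]

lemma cos_sub_arccos_cos (α β : ℝ) :
    cos (α - arccos (cos β)) = cos α * cos β + sin α * |sin β| := by
  rw [cos_sub, cos_arccos (neg_one_le_cos β) (cos_le_one β), sin_arccos_cos]

lemma cos_sub_le_cos_arccos_cos_sub_arccos_cos (ψ β : ℝ) :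
    cos (ψ - β) ≤ cos (arccos (cos ψ) - arccos (cos β)) := by
  rw [cos_sub_arccos_cos, cos_arccos (neg_one_le_cos ψ) (cos_le_one ψ), sin_arccos_cos, cos_sub,
    ← abs_mul]
  linarith [le_abs_self (sin ψ * sin β)]

lemma cos_sub_le_of_cos_le_of_le_cos {c β ψ : ℝ} (hβ : cos β ≤ c) (hψ : c ≤ cos ψ) :
    cos (ψ - β) ≤ cos (arccos c - arccos (cos β)) := by
  have hψc : arccos (cos ψ) ≤ arccos c := arccos_le_arccos hψ
  have hcβ : arccos c ≤ arccos (cos β) := arccos_le_arccos hβ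
  calc cos (ψ - β) ≤ cos (arccos (cos ψ) - arccos (cos β)) :=
        cos_sub_le_cos_arccos_cos_sub_arccos_cos ψ β
    _ = cos (arccos (cos β) - arccos (cos ψ)) := by rw [← cos_neg, neg_sub]
    _ ≤ cos (arccos (cos β) - arccos c) :=
        cos_le_cos_of_nonneg_of_le_pi (by linarith)
          (by linarith [arccos_nonneg (cos ψ), arccos_le_pi (cos β)]) (by linarith)
    _ = cos (arccos c - arccos (cos β)) := by rw [← cos_neg, neg_sub]

theorem stmt_13_general (θ θhat δ : ℝ) (hδ0 : 0 < δ) :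
    (1 - Real.cos (θ - θhat) ≤ δ →
      (1 - Real.cos (θ - θhat) ≤ δ ∧ 1 - Real.cos (θ - θ) = 0 ∧
        ∀ φ : ℝ, 1 - Real.cos (φ - θhat) ≤ δ → 1 - Real.cos (θ - θ) ≤ 1 - Real.cos (φ - θ))) ∧
    (¬ (1 - Real.cos (θ - θhat) ≤ δ) →
      ∃ s : ℝ, (s = -1 ∨ s = 1) ∧
        (∀ s' : ℝ, (s' = -1 ∨ s' = 1) →
          Real.cos ((θhat + s' * Real.arccos (1 - δ)) - θ) ≤
            Real.cos ((θhat + s * Real.arccos (1 - δ)) - θ)) ∧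
        1 - Real.cos ((θhat + s * Real.arccos (1 - δ)) - θhat) = δ ∧
        ∀ φ : ℝ, 1 - Real.cos (φ - θhat) ≤ δ →
          1 - Real.cos ((θhat + s * Real.arccos (1 - δ)) - θ) ≤ 1 - Real.cos (φ - θ)) := by
  refine ⟨fun h => ⟨h, by simp, fun φ _ => by simpa using cos_le_one (φ - θ)⟩, fun h => ?_⟩
  set α := arccos (1 - δ)
  have hcosα : cos α = 1 - δ :=
    cos_arccos (by linarith [neg_one_le_cos (θ - θhat)]) (by linarith)
  have hboundary : ∀ s : ℝ, (s = -1 ∨ s = 1) → 1 - cos ((θhat + s * α) - θhat) = δ :=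
    fun s hs => by rw [add_sub_cancel_left, cos_mul_of_eq_neg_one_or_eq_one hs, hcosα]; ring
  obtain ⟨s, hs, hsβ⟩ := exists_eq_neg_one_or_eq_one_mul_eq_abs (sin (θ - θhat))
  have hoptimal : ∀ φ, 1 - cos (φ - θhat) ≤ δ → cos (φ - θ) ≤ cos ((θhat + s * α) - θ) :=
    fun φ hφ => calc
      cos (φ - θ) = cos ((φ - θhat) - (θ - θhat)) := by ring_nf
      _ ≤ cos (α - arccos (cos (θ - θhat))) :=
        cos_sub_le_of_cos_le_of_le_cos (c := 1 - δ) (by linarith) (by linarith)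
      _ = cos ((θhat + s * α) - θ) := by
        rw [cos_sub_arccos_cos, show θhat + s * α - θ = s * α - (θ - θhat) by ring,
          cos_sub (s * α), cos_mul_of_eq_neg_one_or_eq_one hs, sin_mul_of_eq_neg_one_or_eq_one hs, ← hsβ]
        ring
  exact ⟨s, hs, fun s' hs' => hoptimal _ (hboundary s' hs').le, hboundary s hs,
    fun φ hφ => by linarith [hoptimal φ hφ]⟩

theorem stmt_13 (θ θhat δ : ℝ) (hδ0 : 0 < δ) (hδ2 : δ ≤ 2) :
    (1 - Real.cos (θ - θhat) ≤ δ →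
      (1 - Real.cos (θ - θhat) ≤ δ ∧ 1 - Real.cos (θ - θ) = 0 ∧
        ∀ φ : ℝ, 1 - Real.cos (φ - θhat) ≤ δ → 1 - Real.cos (θ - θ) ≤ 1 - Real.cos (φ - θ))) ∧
    (¬ (1 - Real.cos (θ - θhat) ≤ δ) →
      ∃ s : ℝ, (s = -1 ∨ s = 1) ∧
        (∀ s' : ℝ, (s' = -1 ∨ s' = 1) →
          Real.cos ((θhat + s' * Real.arccos (1 - δ)) - θ) ≤
            Real.cos ((θhat + s * Real.arccos (1 - δ)) - θ)) ∧
        1 - Real.cos ((θhat + s * Real.arccos (1 - δ)) - θhat) = δ ∧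
        ∀ φ : ℝ, 1 - Real.cos (φ - θhat) ≤ δ →
          1 - Real.cos ((θhat + s * Real.arccos (1 - δ)) - θ) ≤ 1 - Real.cos (φ - θ)) :=
  stmt_13_general θ θhat δ hδ0
end
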